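/- Let T be a Marco–Martens map on the probability space (X, ℬ, m) with Marco–Martens cover {X_j}_{j≥0}, let l_B be a Banach limit, and let μ be the set function defined by μ(A) := Σ_{j=0}^∞ l_B((m_n(A ∩ Y_j))_{n≥1}) for measurable A ⊆ X. Then for every j ≥ 0 with μ(Y_j) > 0 (which forces m(Y_j) > 0) and every measurable set A ⊆ Y_j, one has K_j⁻¹·(μ(Y_j)/m(Y_j))·m(A) ≤ μ(A) ≤ K_j·(μ(Y_j)/m(Y_j))·m(A), where K_j is the constant from condition (4) of the Marco–Martens cover. -/

import Mathlib

/-!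
For `A, B ⊆ X_j`, summing condition (4) over `k ≤ n` gives
`m(B) · m_n(A) ≤ K_j · m(A) · m_n(B)`. The sequences `m_n(A)` are bounded: by condition (3)
some `B ⊆ X_j` of positive measure satisfies `T^i B ⊆ X_0`, and `m_n(T^{-i} X_0)` exceeds `1`
by at most `i · m(X) / m(X_0)`. A Banach limit is positive and linear on bounded sequences,
so it preserves the inequality, and for `A ⊆ Y_j` only the `j`-th term of `μ(A)` survives, by
disjointness of the `Y_i`. Taking `B = Y_j` and then swapping the roles of `A` and `Y_j`
gives the two bounds. Finally `m(Y_j) > 0`: otherwise quasi-invariance makes every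
`T^{-k} Y_j` null, hence `μ(Y_j) = 0`.
-/

open MeasureTheory Set Filter

/-- `MMY Xs j = Y_j := X_j \ ⋃_{i < j} X_i`. -/
def MMY {X : Type*} (Xs : ℕ → Set X) (j : ℕ) : Set X := Xs j \ ⋃ i ∈ Set.Iio j, Xs i

/-- `T` is a Marco–Martens map on the probability space `(X, ℬ, m)` with Marco–Martens cover
`(X_j)_{j ≥ 0}` and constants `(K_j)_{j ≥ 0}` (condition (4)): `T` is measurable, maps
measurable sets to measurable sets, `m` is quasi-invariant under `T`, and conditions
(2)–(6) of the definition hold. -/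
structure MarcoMartens {X : Type*} [MeasurableSpace X] (m : Measure X) (T : X → X)
    (Xs : ℕ → Set X) (K : ℕ → ℝ) : Prop where
  measurable_T : Measurable T
  image_meas : ∀ A : Set X, MeasurableSet A → MeasurableSet (T '' A)
  quasi_invariant : m.map T ≪ m
  meas_Xs : ∀ j, MeasurableSet (Xs j)
  cover : m (univ \ ⋃ n, Xs n) = 0
  cond3 : ∀ i j : ℕ, ∃ k : ℕ, 0 < m (Xs i ∩ T^[k] ⁻¹' Xs j)
  one_le_K : ∀ j, 1 ≤ K j
  cond4 : ∀ j : ℕ, ∀ A B : Set X, MeasurableSet A → MeasurableSet B →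
    A ⊆ Xs j → B ⊆ Xs j → ∀ n : ℕ,
    m (T^[n] ⁻¹' A) * m B ≤ ENNReal.ofReal (K j) * (m A * m (T^[n] ⁻¹' B))
  cond5 : ∑' n : ℕ, m (T^[n] ⁻¹' Xs 0) = ⊤
  cond6 : Tendsto (fun l : ℕ => m (T '' ⋃ j ∈ Set.Ici l, MMY Xs j)) atTop (nhds 0)

/-- `mseq m T Xs A n = m_n(A) := (Σ_{k=0}^n m(T^{-k}A)) / (Σ_{k=0}^n m(T^{-k}X_0))`. -/
noncomputable def mseq {X : Type*} [MeasurableSpace X] (m : Measure X) (T : X → X)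
    (Xs : ℕ → Set X) (A : Set X) (n : ℕ) : ℝ :=
  (∑ k ∈ Finset.range (n + 1), (m (T^[k] ⁻¹' A)).toReal) /
    (∑ k ∈ Finset.range (n + 1), (m (T^[k] ⁻¹' Xs 0)).toReal)

/-- `lB` is a Banach limit: a positive, normalized, shift-invariant linear functional on the
space of bounded real sequences. -/
structure IsBanachLimit (lB : (ℕ → ℝ) → ℝ) : Prop where
  map_add : ∀ x y : ℕ → ℝ, (∃ C, ∀ n, |x n| ≤ C) → (∃ C, ∀ n, |y n| ≤ C) →
    lB (x + y) = lB x + lB y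
  map_smul : ∀ (c : ℝ) (x : ℕ → ℝ), (∃ C, ∀ n, |x n| ≤ C) → lB (c • x) = c * lB x
  nonneg : ∀ x : ℕ → ℝ, (∃ C, ∀ n, |x n| ≤ C) → (∀ n, 0 ≤ x n) → 0 ≤ lB x
  map_one : lB (fun _ => 1) = 1
  shift_invariant : ∀ x : ℕ → ℝ, (∃ C, ∀ n, |x n| ≤ C) → lB (fun n => x (n + 1)) = lB x

/-- `MMmu m T Xs lB A = μ(A) := Σ_{j=0}^∞ lB((m_n(A ∩ Y_j))_{n ≥ 1})`. -/
noncomputable def MMmu {X : Type*} [MeasurableSpace X] (m : Measure X) (T : X → X)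
    (Xs : ℕ → Set X) (lB : (ℕ → ℝ) → ℝ) (A : Set X) : ℝ :=
  ∑' j : ℕ, lB (fun n => mseq m T Xs (A ∩ MMY Xs j) (n + 1))

theorem MMY_eq_disjointed {X : Type*} (Xs : ℕ → Set X) : MMY Xs = disjointed Xs := by
  ext j x
  simp [MMY, disjointed_eq_inter_compl]

namespace IsBanachLimit

variable {lB : (ℕ → ℝ) → ℝ}

theorem map_zero (hlB : IsBanachLimit lB) : lB 0 = 0 := by
  simpa using hlB.map_smul 0 0 ⟨0, by simp⟩

theorem mono (hlB : IsBanachLimit lB) {x y : ℕ → ℝ} (hx : ∃ C, ∀ n, |x n| ≤ C)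
    (hy : ∃ C, ∀ n, |y n| ≤ C) (hxy : ∀ n, x n ≤ y n) : lB x ≤ lB y := by
  obtain ⟨Cx, hCx⟩ := hx
  obtain ⟨Cy, hCy⟩ := hy
  have hd : ∃ C, ∀ n, |(y - x) n| ≤ C :=
    ⟨Cy + Cx, fun n => (abs_sub _ _).trans (add_le_add (hCy n) (hCx n))⟩
  have hsplit := hlB.map_add x (y - x) ⟨Cx, hCx⟩ hd
  rw [add_sub_cancel] at hsplit
  linarith [hlB.nonneg (y - x) hd fun n => sub_nonneg.2 (hxy n)]

theorem mul_le_mul_of_forall_le (hlB : IsBanachLimit lB) {x y : ℕ → ℝ}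
    (hx : ∃ C, ∀ n, |x n| ≤ C) (hy : ∃ C, ∀ n, |y n| ≤ C) {c d : ℝ}
    (hxy : ∀ n, c * x n ≤ d * y n) : c * lB x ≤ d * lB y := by
  have hsmul : ∀ (a : ℝ) (z : ℕ → ℝ), (∃ C, ∀ n, |z n| ≤ C) →
      ∃ C, ∀ n, |(a • z) n| ≤ C := by
    rintro a z ⟨C, hC⟩
    exact ⟨|a| * C, fun n => by
      simpa only [Pi.smul_apply, smul_eq_mul, abs_mul] using
        mul_le_mul_of_nonneg_left (hC n) (abs_nonneg a)⟩
  rw [← hlB.map_smul c x hx, ← hlB.map_smul d y hy]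
  exact hlB.mono (hsmul c x hx) (hsmul d y hy) hxy

end IsBanachLimit

section MarcoMartensMap

variable {X : Type*} [MeasurableSpace X] {m : Measure X} {T : X → X} {Xs : ℕ → Set X}
  {K : ℕ → ℝ} {lB : (ℕ → ℝ) → ℝ} {A B : Set X}

section mseq

open Finset

theorem mseq_nonneg (A : Set X) (n : ℕ) : 0 ≤ mseq m T Xs A n :=
  div_nonneg (sum_nonneg fun _ _ => ENNReal.toReal_nonneg)
    (sum_nonneg fun _ _ => ENNReal.toReal_nonneg)

variable [IsFiniteMeasure m]

theorem mseq_mono (hAB : A ⊆ B) (n : ℕ) : mseq m T Xs A n ≤ mseq m T Xs B n :=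
  div_le_div_of_nonneg_right
    (sum_le_sum fun _ _ =>
      ENNReal.toReal_mono (measure_ne_top _ _) (measure_mono (preimage_mono hAB)))
    (sum_nonneg fun _ _ => ENNReal.toReal_nonneg)

theorem mseq_preimage_iterate_Xs_zero_le (h0 : m (Xs 0) ≠ 0) (i n : ℕ) :
    mseq m T Xs (T^[i] ⁻¹' Xs 0) n ≤ 1 + i * (m univ).toReal / (m (Xs 0)).toReal := by
  set t : ℕ → ℝ := fun k => (m (T^[k] ⁻¹' Xs 0)).toReal
  set c := (m univ).toReal
  have ht0 : ∀ k, 0 ≤ t k := fun _ => ENNReal.toReal_nonneg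
  have htc : ∀ k, t k ≤ c := fun _ =>
    ENNReal.toReal_mono (measure_ne_top _ _) (measure_mono (subset_univ _))
  have hx0 : 0 < (m (Xs 0)).toReal := ENNReal.toReal_pos h0 (measure_ne_top _ _)
  have hD : (m (Xs 0)).toReal ≤ ∑ k ∈ range (n + 1), t k :=
    single_le_sum (f := t) (fun k _ => ht0 k) (mem_range.2 n.succ_pos)
  have hnum : ∑ k ∈ range (n + 1), (m (T^[k] ⁻¹' (T^[i] ⁻¹' Xs 0))).toReal
      ≤ ∑ k ∈ range (n + 1), t k + i * c :=
    calc _ = ∑ k ∈ range (n + 1), t (i + k) := by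
          simp only [t, ← preimage_comp, ← Function.iterate_add]
      _ ≤ ∑ k ∈ range (i + (n + 1)), t k := by
          rw [sum_range_add t i]
          exact le_add_of_nonneg_left (sum_nonneg fun k _ => ht0 k)
      _ = ∑ k ∈ range (n + 1), t k + ∑ k ∈ range i, t (n + 1 + k) := by
          rw [add_comm, sum_range_add]
      _ ≤ ∑ k ∈ range (n + 1), t k + i * c := by
          grw [sum_le_card_nsmul (range i) _ c fun k _ => htc _]
          simp
  have hic : i * c ≤ i * c / (m (Xs 0)).toReal * ∑ k ∈ range (n + 1), t k := by
    rw [div_mul_eq_mul_div, le_div_iff₀ hx0]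
    exact mul_le_mul_of_nonneg_left hD (by positivity)
  rw [mseq, div_le_iff₀ (hx0.trans_le hD)]
  linarith

end mseq

namespace MarcoMartens

open Finset

theorem quasiMeasurePreserving (hMM : MarcoMartens m T Xs K) :
    Measure.QuasiMeasurePreserving T m m :=
  ⟨hMM.measurable_T, hMM.quasi_invariant⟩

theorem measure_preimage_iterate_eq_zero (hMM : MarcoMartens m T Xs K) (hA : m A = 0)
    (k : ℕ) : m (T^[k] ⁻¹' A) = 0 :=
  (hMM.quasiMeasurePreserving.iterate k).preimage_null hA

theorem measure_Xs_zero_ne_zero (hMM : MarcoMartens m T Xs K) : m (Xs 0) ≠ 0 := fun h0 => by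
  simpa [hMM.measure_preimage_iterate_eq_zero h0] using hMM.cond5

theorem mseq_eq_zero (hMM : MarcoMartens m T Xs K) (hA : m A = 0) (n : ℕ) :
    mseq m T Xs A n = 0 := by
  simp [mseq, hMM.measure_preimage_iterate_eq_zero hA]

variable [IsFiniteMeasure m]

theorem mul_mseq_le (hMM : MarcoMartens m T Xs K) {j : ℕ} (hA : MeasurableSet A)
    (hB : MeasurableSet B) (hAj : A ⊆ Xs j) (hBj : B ⊆ Xs j) (n : ℕ) :
    (m B).toReal * mseq m T Xs A n ≤ K j * (m A).toReal * mseq m T Xs B n := by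
  have hK : 0 ≤ K j := zero_le_one.trans (hMM.one_le_K j)
  have hterm : ∀ k, (m B).toReal * (m (T^[k] ⁻¹' A)).toReal
      ≤ K j * (m A).toReal * (m (T^[k] ⁻¹' B)).toReal := fun k => by
    have h := ENNReal.toReal_mono (by finiteness) (hMM.cond4 j A B hA hB hAj hBj k)
    simp only [ENNReal.toReal_mul, ENNReal.toReal_ofReal hK] at h
    linarith
  simp only [mseq, mul_div_assoc']
  exact div_le_div_of_nonneg_right (by simpa only [mul_sum] using sum_le_sum fun k _ => hterm k)
    (sum_nonneg fun _ _ => ENNReal.toReal_nonneg)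

theorem exists_abs_mseq_le (hMM : MarcoMartens m T Xs K) {j : ℕ} (hA : MeasurableSet A)
    (hAj : A ⊆ Xs j) : ∃ C, ∀ n, |mseq m T Xs A n| ≤ C := by
  obtain ⟨i, hi⟩ := hMM.cond3 j 0
  set B := Xs j ∩ T^[i] ⁻¹' Xs 0
  have hB : MeasurableSet B :=
    (hMM.meas_Xs j).inter ((hMM.meas_Xs 0).preimage (hMM.measurable_T.iterate i))
  have hmB : 0 < (m B).toReal := ENNReal.toReal_pos hi.ne' (measure_ne_top _ _)
  have hKA : 0 ≤ K j * (m A).toReal :=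
    mul_nonneg (zero_le_one.trans (hMM.one_le_K j)) ENNReal.toReal_nonneg
  set M := 1 + i * (m univ).toReal / (m (Xs 0)).toReal
  refine ⟨K j * (m A).toReal * M / (m B).toReal, fun n => ?_⟩
  rw [abs_of_nonneg (mseq_nonneg _ _), le_div_iff₀ hmB, mul_comm]
  calc (m B).toReal * mseq m T Xs A n ≤ K j * (m A).toReal * mseq m T Xs B n :=
        hMM.mul_mseq_le hA hB hAj inter_subset_left n
    _ ≤ K j * (m A).toReal * M := mul_le_mul_of_nonneg_left
        ((mseq_mono inter_subset_right n).trans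
          (mseq_preimage_iterate_Xs_zero_le hMM.measure_Xs_zero_ne_zero i n)) hKA

end MarcoMartens

theorem MMmu_eq_of_subset (hlB : IsBanachLimit lB) {j : ℕ} (hA : A ⊆ MMY Xs j) :
    MMmu m T Xs lB A = lB fun n => mseq m T Xs A (n + 1) := by
  rw [MMmu, tsum_eq_single j, inter_eq_left.2 hA]
  intro i hij
  have hempty : A ∩ MMY Xs i = ∅ := by
    rw [MMY_eq_disjointed] at hA ⊢
    exact ((disjoint_disjointed Xs hij.symm).mono_left hA).inter_eq
  have hzero : (fun n => mseq m T Xs (A ∩ MMY Xs i) (n + 1)) = 0 := by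
    ext n
    simp [hempty, mseq]
  rw [hzero, hlB.map_zero]

theorem MarcoMartens.mul_MMmu_le [IsFiniteMeasure m] (hMM : MarcoMartens m T Xs K)
    (hlB : IsBanachLimit lB) {j : ℕ} (hA : MeasurableSet A) (hB : MeasurableSet B)
    (hAj : A ⊆ MMY Xs j) (hBj : B ⊆ MMY Xs j) :
    (m B).toReal * MMmu m T Xs lB A ≤ K j * (m A).toReal * MMmu m T Xs lB B := by
  have hAj' := hAj.trans sdiff_subset
  have hBj' := hBj.trans sdiff_subset
  obtain ⟨CA, hCA⟩ := hMM.exists_abs_mseq_le hA hAj'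
  obtain ⟨CB, hCB⟩ := hMM.exists_abs_mseq_le hB hBj'
  rw [MMmu_eq_of_subset hlB hAj, MMmu_eq_of_subset hlB hBj]
  exact hlB.mul_le_mul_of_forall_le ⟨CA, fun n => hCA (n + 1)⟩ ⟨CB, fun n => hCB (n + 1)⟩
    fun n => hMM.mul_mseq_le hA hB hAj' hBj' (n + 1)

end MarcoMartensMap

/-- For a Marco–Martens map with constants `K_j` (from condition (4)) and a Banach limit `lB`,
for every `j` with `μ(Y_j) > 0` (which forces `m(Y_j) > 0`) and every measurable `A ⊆ Y_j`:
`K_j⁻¹ (μ(Y_j)/m(Y_j)) m(A) ≤ μ(A) ≤ K_j (μ(Y_j)/m(Y_j)) m(A)`. -/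
theorem stmt11 {X : Type*} [MeasurableSpace X] (m : Measure X) [IsProbabilityMeasure m]
    (T : X → X) (Xs : ℕ → Set X) (K : ℕ → ℝ) (hMM : MarcoMartens m T Xs K)
    (lB : (ℕ → ℝ) → ℝ) (hlB : IsBanachLimit lB)
    (j : ℕ) (hpos : 0 < MMmu m T Xs lB (MMY Xs j)) :
    0 < (m (MMY Xs j)).toReal ∧
    ∀ A : Set X, MeasurableSet A → A ⊆ MMY Xs j →
      (K j)⁻¹ * (MMmu m T Xs lB (MMY Xs j) / (m (MMY Xs j)).toReal) * (m A).toReal ≤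
          MMmu m T Xs lB A ∧
        MMmu m T Xs lB A ≤
          K j * (MMmu m T Xs lB (MMY Xs j) / (m (MMY Xs j)).toReal) * (m A).toReal := by
  have hY : MeasurableSet (MMY Xs j) := by
    rw [MMY_eq_disjointed]
    exact .disjointed hMM.meas_Xs j
  have hmY : 0 < (m (MMY Xs j)).toReal := by
    refine ENNReal.toReal_pos (fun hY0 => hpos.ne' ?_) (measure_ne_top _ _)
    rw [MMmu_eq_of_subset hlB subset_rfl, ← hlB.map_zero]
    exact congrArg lB (funext fun n => hMM.mseq_eq_zero hY0 (n + 1))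
  have hK : 0 < K j := zero_lt_one.trans_le (hMM.one_le_K j)
  set μY := MMmu m T Xs lB (MMY Xs j)
  set mY := (m (MMY Xs j)).toReal
  refine ⟨hmY, fun A hA hAY => ⟨?_, ?_⟩⟩
  · have h := hMM.mul_MMmu_le hlB hY hA subset_rfl hAY
    rw [show (K j)⁻¹ * (μY / mY) * (m A).toReal = (m A).toReal * μY / (K j * mY) by field_simp,
      div_le_iff₀ (mul_pos hK hmY)]
    linarith
  · have h := hMM.mul_MMmu_le hlB hA hY hAY subset_rfl
    rw [show K j * (μY / mY) * (m A).toReal = K j * (m A).toReal * μY / mY by ring,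
      le_div_iff₀ hmY]
    linarith
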